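/- arXiv:2207.06636 — 7 statements merged into one kernel-verified Lean document; each statement's English description precedes it below -/
import Mathlib

section
/- If f : 𝔹ℂ → 𝔹ℂ is a bijective real-algebra homomorphism, then f maps each element of {i₁, -i₁, i₂, -i₂} into {i₁, -i₁, i₂, -i₂}, and maps each element of {j₁, -j₁} into {j₁, -j₁}. -/
noncomputable section

/-- The bicomplex numbers, modeled via their idempotent representation as `ℂ × ℂ`
(componentwise addition and multiplication). -/
abbrev BC : Type := ℂ × ℂ

namespace BC

/-- The imaginary unit `i₁`. -/
def i1 : BC := (Complex.I, Complex.I)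

/-- The imaginary unit `i₂`. -/
def i2 : BC := (-Complex.I, Complex.I)

/-- The hyperbolic unit `j₁ = i₁ i₂`. -/
def j1 : BC := (1, -1)

/-- The idempotent `e₁ = (1 + j₁)/2`. -/
def e1 : BC := (1, 0)

/-- The idempotent `e₂ = (1 - j₁)/2`. -/
def e2 : BC := (0, 1)

/-- The embedding of `ℂ(i₁)` into the bicomplex numbers. -/
def C (z : ℂ) : BC := (z, z)

end BC

open BC

lemma csq_neg1 {z : ℂ} (h : z * z = -1) : z = Complex.I ∨ z = -Complex.I := by
  have h0 : (z - Complex.I) * (z + Complex.I) = 0 := by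
    linear_combination h - Complex.I_sq
  rcases mul_eq_zero.mp h0 with h' | h'
  · left; exact sub_eq_zero.mp h'
  · right; exact eq_neg_of_add_eq_zero_left h'

lemma csq_one {z : ℂ} (h : z * z = 1) : z = 1 ∨ z = -1 := by
  have h0 : (z - 1) * (z + 1) = 0 := by linear_combination h
  rcases mul_eq_zero.mp h0 with h' | h'
  · left; exact sub_eq_zero.mp h'
  · right; exact eq_neg_of_add_eq_zero_left h'

lemma bc_sqrt_neg1 {u : BC} (h : u * u = -1) :
    u = i1 ∨ u = -i1 ∨ u = i2 ∨ u = -i2 := by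
  have h1 : u.1 * u.1 = -1 := congrArg Prod.fst h
  have h2 : u.2 * u.2 = -1 := congrArg Prod.snd h
  rcases csq_neg1 h1 with a | a <;> rcases csq_neg1 h2 with b | b <;>
    simp [i1, i2, Prod.ext_iff, a, b]

lemma bc_sqrt_one {u : BC} (h : u * u = 1) :
    u = 1 ∨ u = -1 ∨ u = j1 ∨ u = -j1 := by
  have h1 : u.1 * u.1 = 1 := congrArg Prod.fst h
  have h2 : u.2 * u.2 = 1 := congrArg Prod.snd h
  rcases csq_one h1 with a | a <;> rcases csq_one h2 with b | b <;>
    simp [j1, Prod.ext_iff, a, b]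

/-- A bijective real-algebra homomorphism of the bicomplex numbers maps signed imaginary
units to signed imaginary units, and signed hyperbolic units to signed hyperbolic units. -/
theorem stmt_7 (f : BC → BC)
    (hadd : ∀ s t : BC, f (s + t) = f s + f t)
    (hsmul : ∀ (r : ℝ) (s : BC), f (r • s) = r • f s)
    (hmul : ∀ s t : BC, f (s * t) = f s * f t)
    (hbij : Function.Bijective f) :
    (∀ s ∈ ({i1, -i1, i2, -i2} : Set BC), f s ∈ ({i1, -i1, i2, -i2} : Set BC)) ∧
    (∀ s ∈ ({j1, -j1} : Set BC), f s ∈ ({j1, -j1} : Set BC)) := by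
  have hneg : ∀ s : BC, f (-s) = -f s := by
    intro s
    have := hsmul (-1) s
    simpa using this
  have h1 : f 1 = 1 := by
    obtain ⟨x, hx⟩ := hbij.2 1
    have := hmul x 1
    rw [mul_one, hx, one_mul] at this
    exact this.symm
  have hm1 : f (-1) = -1 := by rw [hneg, h1]
  have hsq : ∀ s : BC, s * s = -1 → f s ∈ ({i1, -i1, i2, -i2} : Set BC) := by
    intro s hs
    have : f s * f s = -1 := by rw [← hmul, hs, hm1]
    rcases bc_sqrt_neg1 this with h | h | h | h <;> simp [h]
  have hi1 : i1 * i1 = -1 := by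
    simp [i1, Prod.ext_iff, Complex.I_mul_I]
  have hi2 : i2 * i2 = -1 := by
    simp [i2, Prod.ext_iff, Complex.I_mul_I]
  have hni : ∀ s : BC, s * s = -1 → (-s) * (-s) = -1 := by
    intro s hs; rw [neg_mul_neg, hs]
  constructor
  · intro s hs
    rcases hs with h | h | h | h <;> subst h
    · exact hsq _ hi1
    · exact hsq _ (hni _ hi1)
    · exact hsq _ hi2
    · exact hsq _ (hni _ hi2)
  · have hj : f j1 ∈ ({j1, -j1} : Set BC) := by
      have hjj : j1 * j1 = 1 := by simp [j1, Prod.ext_iff]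
      have : f j1 * f j1 = 1 := by rw [← hmul, hjj, h1]
      rcases bc_sqrt_one this with h | h | h | h
      · exfalso
        have := hbij.1 (h.trans h1.symm)
        simp [j1, Prod.ext_iff] at this
        exact (by norm_num : (-1 : ℂ) ≠ 1) this
      · exfalso
        have := hbij.1 (h.trans hm1.symm)
        simp [j1, Prod.ext_iff] at this
        exact (by norm_num : (1 : ℂ) ≠ -1) this
      · simp [h]
      · simp [h]
    intro s hs
    rcases hs with h | h
    · subst h; exact hj
    · subst h
      rw [hneg]
      simp only [Set.mem_insert_iff, Set.mem_singleton_iff] at hj ⊢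
      rcases hj with h | h <;> simp [h]
end
end

section
/- There are exactly eight bijective real-algebra homomorphisms f : 𝔹ℂ → 𝔹ℂ (equivalently, exactly eight ℝ-algebra automorphisms of the bicomplex numbers). -/
noncomputable section

open BC

/-!
An automorphism of `A × A`, for a domain `A`, permutes the two nontrivial idempotents
`(1, 0)` and `(0, 1)`, and both permutations occur. An automorphism fixing `(1, 0)` satisfies
`f (x, y) = f (x, x) * f (1, 0) + f (y, y) * f (0, 1)`, so it is the product of two
automorphisms of `A`. By orbit–stabilizer, `|Aut (A × A)| = 2 |Aut A|²`, and for `A = ℂ` over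
`ℝ` this is `2 · 2² = 8`.
-/

namespace AlgEquiv

variable {R : Type*} [CommSemiring R]

def prodComm (A B : Type*) [Semiring A] [Semiring B] [Algebra R A] [Algebra R B] :
    (A × B) ≃ₐ[R] B × A :=
  .ofRingEquiv (f := RingEquiv.prodComm) fun _ => rfl

section Ring

variable {A : Type*} [Ring A] [Algebra R A]

theorem apply_mk_of_apply_one_zero {f : (A × A) ≃ₐ[R] A × A} (hf : f (1, 0) = (1, 0))
    (x y : A) : f (x, y) = ((f (x, x)).1, (f (y, y)).2) := by
  have hxy : ((x, y) : A × A) = (x, x) * (1, 0) + (y, y) * (1 - (1, 0)) := by ext <;> simp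
  rw [hxy, map_add, map_mul, map_mul, map_sub, map_one, hf]
  ext <;> simp

theorem symm_apply_one_zero {f : (A × A) ≃ₐ[R] A × A} (hf : f (1, 0) = (1, 0)) :
    f.symm (1, 0) = (1, 0) :=
  f.symm_apply_eq.mpr hf.symm

theorem fst_apply_diag_fst_symm {f : (A × A) ≃ₐ[R] A × A} (hf : f (1, 0) = (1, 0)) (z w : A) :
    (f ((f.symm (z, w)).1, (f.symm (z, w)).1)).1 = z := by
  rw [← congrArg Prod.fst (apply_mk_of_apply_one_zero hf _ (f.symm (z, w)).2)]
  simp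

theorem snd_apply_diag_snd_symm {f : (A × A) ≃ₐ[R] A × A} (hf : f (1, 0) = (1, 0)) (z w : A) :
    (f ((f.symm (z, w)).2, (f.symm (z, w)).2)).2 = w := by
  rw [← congrArg Prod.snd (apply_mk_of_apply_one_zero hf (f.symm (z, w)).1 _)]
  simp

def diagComp (f : (A × A) ≃ₐ[R] A × A) (p : A × A →ₐ[R] A) : A →ₐ[R] A :=
  p.comp (f.toAlgHom.comp ((AlgHom.id R A).prod (AlgHom.id R A)))

def fstFactor (f : (A × A) ≃ₐ[R] A × A) (hf : f (1, 0) = (1, 0)) : A ≃ₐ[R] A :=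
  .ofAlgHom (f.diagComp (AlgHom.fst R A A)) (f.symm.diagComp (AlgHom.fst R A A))
    (AlgHom.ext fun z => fst_apply_diag_fst_symm hf z z)
    (AlgHom.ext fun z => fst_apply_diag_fst_symm (f := f.symm) (symm_apply_one_zero hf) z z)

def sndFactor (f : (A × A) ≃ₐ[R] A × A) (hf : f (1, 0) = (1, 0)) : A ≃ₐ[R] A :=
  .ofAlgHom (f.diagComp (AlgHom.snd R A A)) (f.symm.diagComp (AlgHom.snd R A A))
    (AlgHom.ext fun z => snd_apply_diag_snd_symm hf z z)
    (AlgHom.ext fun z => snd_apply_diag_snd_symm (f := f.symm) (symm_apply_one_zero hf) z z)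

theorem prodCongr_mem_stabilizer_one_zero (g h : A ≃ₐ[R] A) :
    prodCongr g h ∈ MulAction.stabilizer ((A × A) ≃ₐ[R] A × A) ((1, 0) : A × A) := by
  simp [AlgEquiv.smul_def]

theorem card_stabilizer_one_zero :
    Nat.card (MulAction.stabilizer ((A × A) ≃ₐ[R] A × A) ((1, 0) : A × A)) =
      Nat.card (A ≃ₐ[R] A) * Nat.card (A ≃ₐ[R] A) := by
  rw [← Nat.card_prod]
  refine (Nat.card_eq_of_bijective
    (fun gh => ⟨prodCongr gh.1 gh.2, prodCongr_mem_stabilizer_one_zero gh.1 gh.2⟩) ⟨?_, ?_⟩).symm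
  · rintro ⟨g, h⟩ ⟨g', h'⟩ he
    have hdiag (x : A) := congrArg (· (x, x)) (Subtype.ext_iff.mp he)
    exact Prod.ext (AlgEquiv.ext fun x => congrArg Prod.fst (hdiag x))
      (AlgEquiv.ext fun x => congrArg Prod.snd (hdiag x))
  · rintro ⟨f, hf⟩
    exact ⟨(fstFactor f hf, sndFactor f hf),
      Subtype.ext (AlgEquiv.ext fun x => (apply_mk_of_apply_one_zero hf x.1 x.2).symm)⟩

end Ring

section Domain

variable {A : Type*} [Ring A] [IsDomain A] [Algebra R A]

theorem apply_one_zero_eq_or (f : (A × A) ≃ₐ[R] A × A) :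
    f (1, 0) = (1, 0) ∨ f (1, 0) = (0, 1) := by
  have hidem : IsIdempotentElem (f (1, 0)) :=
    (isIdempotentElem_iff.mpr (by ext <;> simp)).map f
  have h0 : f (1, 0) ≠ 0 := by
    rw [ne_eq, map_eq_zero_iff f f.injective]
    simp
  have h1 : f (1, 0) ≠ 1 := by
    rw [ne_eq, ← map_one f, f.injective.eq_iff]
    simp
  generalize f (1, 0) = p at hidem h0 h1 ⊢
  obtain ⟨a, b⟩ := p
  have ha : IsIdempotentElem a := congrArg Prod.fst hidem
  have hb : IsIdempotentElem b := congrArg Prod.snd hidem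
  rcases IsIdempotentElem.iff_eq_zero_or_one.mp ha with rfl | rfl <;>
  rcases IsIdempotentElem.iff_eq_zero_or_one.mp hb with rfl | rfl <;>
  simp_all

theorem orbit_one_zero :
    MulAction.orbit ((A × A) ≃ₐ[R] A × A) ((1, 0) : A × A) = {(1, 0), (0, 1)} := by
  ext p
  simp only [MulAction.mem_orbit_iff, AlgEquiv.smul_def, Set.mem_insert_iff,
    Set.mem_singleton_iff]
  constructor
  · rintro ⟨f, rfl⟩
    exact apply_one_zero_eq_or f
  · rintro (rfl | rfl)
    · exact ⟨1, rfl⟩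
    · exact ⟨prodComm A A, rfl⟩

variable (R A) in
theorem card_prod_self : Nat.card ((A × A) ≃ₐ[R] A × A) = 2 * Nat.card (A ≃ₐ[R] A) ^ 2 := by
  rw [← (MulAction.stabilizer ((A × A) ≃ₐ[R] A × A) ((1, 0) : A × A)).card_mul_index,
    MulAction.index_stabilizer, orbit_one_zero, Set.ncard_pair (by simp),
    card_stabilizer_one_zero]
  ring

end Domain

end AlgEquiv

theorem Complex.card_algEquiv_real : Nat.card (ℂ ≃ₐ[ℝ] ℂ) = 2 := by
  have : IsAlgClosure ℝ ℂ := ⟨Complex.isAlgClosed, .of_finite ℝ ℂ⟩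
  have : IsGalois ℝ ℂ := ⟨⟩
  rw [IsGalois.card_aut_eq_finrank, Complex.finrank_real_complex]

/-- There are exactly eight ℝ-algebra automorphisms of the bicomplex numbers. -/
theorem stmt_8 : Nat.card (BC ≃ₐ[ℝ] BC) = 8 := by
  rw [AlgEquiv.card_prod_self, Complex.card_algEquiv_real]
  norm_num
end
end

section
/- There are exactly six ℝ-algebra automorphisms f of 𝔹ℂ with f ∘ f = id, namely: the identity; (z₁ + z₂i₂) ↦ z₁ - z₂i₂; (z₁ + z₂i₂) ↦ z̄₁ + z̄₂i₂; (z₁ + z₂i₂) ↦ z̄₁ - z̄₂i₂; the map determined by i₁ ↦ -i₂, i₂ ↦ -i₁; and the map determined by i₁ ↦ i₂, i₂ ↦ i₁. -/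
/-!
An ℝ-algebra automorphism `f` of `𝔹ℂ` is determined by `f i₁` and `f i₂`, since every element
is `z₁ + z₂ i₂` with `z₁, z₂ ∈ ℂ(i₁) = ℝ + ℝ i₁`. Both images square to `-1`, and in the
idempotent coordinates `𝔹ℂ ≅ ℂ × ℂ` the square roots of `-1` are `(±i, ±i)`, i.e. `±i₁, ±i₂`.
Injectivity forces `f i₂ ≠ ±f i₁`, which leaves eight candidates. The two with
`i₁ ↦ ±i₂, i₂ ↦ ∓i₁` send `i₁` to `-i₁` under `f ∘ f`; the other six are involutions, realised on
`ℂ × ℂ` by complex conjugation on either factor and the exchange of the factors.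
-/

noncomputable section

open BC

open Complex ComplexConjugate

namespace BC

@[simp] lemma C_zero : C 0 = 0 := rfl
@[simp] lemma C_one : C 1 = 1 := rfl
@[simp] lemma C_I : C I = i1 := rfl
@[simp] lemma C_neg (z : ℂ) : C (-z) = -C z := rfl

lemma i1_mul_i1 : i1 * i1 = -1 := by simp [i1, Prod.ext_iff]
lemma i2_mul_i2 : i2 * i2 = -1 := by simp [i2, Prod.ext_iff]

lemma neg_I_ne_I : -I ≠ I := by simp [neg_eq_iff_add_eq_zero, ← two_mul, I_ne_zero]

lemma neg_i1_ne_i1 : -i1 ≠ i1 := by simp [i1, Prod.ext_iff, neg_I_ne_I]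
lemma i2_ne_i1 : i2 ≠ i1 := by simp [i1, i2, Prod.ext_iff, neg_I_ne_I]
lemma i2_ne_neg_i1 : i2 ≠ -i1 := by simp [i1, i2, Prod.ext_iff, neg_I_ne_I.symm]

lemma C_eq_re_add_im_smul_i1 (z : ℂ) : C z = algebraMap ℝ BC z.re + z.im • i1 := by
  simp [C, i1]

lemma exists_eq_C_add_C_mul_i2 (s : BC) : ∃ z1 z2 : ℂ, s = C z1 + C z2 * i2 :=
  ⟨(s.1 + s.2) / 2, (s.1 - s.2) / 2 * I, by
    ext <;> simp [C, i2] <;> ring_nf <;> simp only [I_sq] <;> ring⟩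

section Hom

variable {A F : Type*} [Ring A] [Algebra ℝ A] [FunLike F BC A] [AlgHomClass F ℝ BC A]

lemma map_C (f : F) (z : ℂ) : f (C z) = algebraMap ℝ A z.re + z.im • f i1 := by
  rw [C_eq_re_add_im_smul_i1, map_add, AlgHomClass.commutes, map_smul]

theorem hom_ext {f g : F} (h1 : f i1 = g i1) (h2 : f i2 = g i2) : f = g := by
  refine DFunLike.ext f g fun s => ?_
  obtain ⟨z1, z2, rfl⟩ := exists_eq_C_add_C_mul_i2 s
  simp only [map_add, map_mul, map_C, h1, h2]

end Hom

lemma eq_of_mul_self_eq_neg_one {x : BC} (hx : x * x = -1) : x = i1 ∨ x = -i1 ∨ x = i2 ∨ x = -i2 := by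
  have h1 : x.1 = I ∨ x.1 = -I := mul_self_eq_mul_self_iff.mp (by simpa using congrArg Prod.fst hx)
  have h2 : x.2 = I ∨ x.2 = -I := mul_self_eq_mul_self_iff.mp (by simpa using congrArg Prod.snd hx)
  rcases h1 with h1 | h1 <;> rcases h2 with h2 | h2 <;> simp [i1, i2, Prod.ext_iff, h1, h2]

lemma map_eq_of_mul_self_eq_neg_one {F : Type*} [FunLike F BC BC] [RingHomClass F BC BC] (f : F)
    {x : BC} (hx : x * x = -1) :
    f x = i1 ∨ f x = -i1 ∨ f x = i2 ∨ f x = -i2 :=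
  eq_of_mul_self_eq_neg_one (by rw [← map_mul, hx, map_neg, map_one])

def involutionImages : Set (BC × BC) :=
  {(i1, i2), (i1, -i2), (-i1, i2), (-i1, -i2), (-i2, -i1), (i2, i1)}

lemma map_i1_i2_mem_involutionImages_or (f : BC ≃ₐ[ℝ] BC) :
    (f i1, f i2) ∈ involutionImages ∨ (f i1 = i2 ∧ f i2 = -i1) ∨ (f i1 = -i2 ∧ f i2 = i1) := by
  have hne : f i2 ≠ f i1 := f.injective.ne i2_ne_i1
  have hne' : f i2 ≠ -f i1 := by rw [← map_neg]; exact f.injective.ne i2_ne_neg_i1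
  obtain h1 | h1 | h1 | h1 := map_eq_of_mul_self_eq_neg_one f i1_mul_i1 <;>
  obtain h2 | h2 | h2 | h2 := map_eq_of_mul_self_eq_neg_one f i2_mul_i2 <;>
  rw [h1, h2] at hne hne' ⊢ <;>
  simp [involutionImages, i1, i2, Prod.ext_iff, neg_I_ne_I, neg_I_ne_I.symm] at hne hne' ⊢

theorem involutive_iff (f : BC ≃ₐ[ℝ] BC) :
    (∀ s, f (f s) = s) ↔ (f i1, f i2) ∈ involutionImages := by
  constructor
  · intro hf
    have hf1 := hf i1
    obtain h | ⟨h1, h2⟩ | ⟨h1, h2⟩ := map_i1_i2_mem_involutionImages_or f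
    · exact h
    · rw [h1, h2] at hf1
      exact absurd hf1 neg_i1_ne_i1
    · rw [h1, map_neg, h2] at hf1
      exact absurd hf1 neg_i1_ne_i1
  · intro h
    suffices f.trans f = AlgEquiv.refl from fun s => DFunLike.congr_fun this s
    simp only [involutionImages, Set.mem_insert_iff, Set.mem_singleton_iff, Prod.mk.injEq] at h
    obtain ⟨h1, h2⟩ | ⟨h1, h2⟩ | ⟨h1, h2⟩ | ⟨h1, h2⟩ | ⟨h1, h2⟩ | ⟨h1, h2⟩ := h <;>
    exact hom_ext (by simp [h1, h2]) (by simp [h1, h2])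

def swap : BC ≃ₐ[ℝ] BC := .ofRingEquiv (f := RingEquiv.prodComm) fun _ => rfl

@[simp] lemma swap_apply (s : BC) : swap s = (s.2, s.1) := rfl

lemma exists_algEquiv_of_mem_involutionImages {p : BC × BC} (hp : p ∈ involutionImages) :
    ∃ f : BC ≃ₐ[ℝ] BC, (f i1, f i2) = p := by
  simp only [involutionImages, Set.mem_insert_iff, Set.mem_singleton_iff] at hp
  obtain rfl | rfl | rfl | rfl | rfl | rfl := hp
  · exact ⟨.refl, rfl⟩
  · exact ⟨swap, by simp [i1, i2]⟩
  · exact ⟨swap.trans (.prodCongr conjAe conjAe), by simp [i1, i2]⟩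
  · exact ⟨.prodCongr conjAe conjAe, by simp [i1, i2]⟩
  · exact ⟨.prodCongr .refl conjAe, by simp [i1, i2]⟩
  · exact ⟨.prodCongr conjAe .refl, by simp [i1, i2]⟩

lemma ncard_involutionImages : involutionImages.ncard = 6 := by
  simp [involutionImages, Set.ncard_insert_of_notMem, i1, i2, neg_I_ne_I, neg_I_ne_I.symm]

theorem card_involutions : Nat.card {f : BC ≃ₐ[ℝ] BC // ∀ s, f (f s) = s} = 6 := by
  have himage : (fun f : BC ≃ₐ[ℝ] BC => (f i1, f i2)) '' {f | ∀ s, f (f s) = s} = involutionImages := by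
    ext p
    constructor
    · rintro ⟨f, hf, rfl⟩
      exact (involutive_iff f).1 hf
    · intro hp
      obtain ⟨f, rfl⟩ := exists_algEquiv_of_mem_involutionImages hp
      exact ⟨f, (involutive_iff f).2 hp, rfl⟩
  have hinj : Function.Injective fun f : BC ≃ₐ[ℝ] BC => (f i1, f i2) :=
    fun f g h => hom_ext (Prod.ext_iff.1 h).1 (Prod.ext_iff.1 h).2
  rw [← Set.coe_ofPred, Nat.card_coe_set_eq, ← Set.ncard_image_of_injective _ hinj, himage,
    ncard_involutionImages]

section Conditions

variable (f : BC ≃ₐ[ℝ] BC)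

lemma forall_map_eq_self_iff : (∀ s, f s = s) ↔ f i1 = i1 ∧ f i2 = i2 :=
  ⟨fun h => ⟨h i1, h i2⟩, fun ⟨h1, h2⟩ => DFunLike.congr_fun (hom_ext (g := AlgEquiv.refl) h1 h2)⟩

variable {f}

lemma map_C_of_map_i1_eq (h : f i1 = i1) (z : ℂ) : f (C z) = C z := by
  rw [map_C, h, C_eq_re_add_im_smul_i1]

lemma map_C_of_map_i1_eq_neg (h : f i1 = -i1) (z : ℂ) : f (C z) = C (conj z) := by
  rw [map_C, h, C_eq_re_add_im_smul_i1, conj_re, conj_im, neg_smul, smul_neg]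

variable (f)

lemma forall_map_C_add_C_mul_i2_eq_sub_iff :
    (∀ z1 z2 : ℂ, f (C z1 + C z2 * i2) = C z1 - C z2 * i2) ↔ f i1 = i1 ∧ f i2 = -i2 := by
  refine ⟨fun h => ⟨by simpa using h I 0, by simpa using h 0 1⟩, fun ⟨h1, h2⟩ z1 z2 => ?_⟩
  rw [map_add, map_mul, map_C_of_map_i1_eq h1, map_C_of_map_i1_eq h1, h2, mul_neg, sub_eq_add_neg]

lemma forall_map_C_add_C_mul_i2_eq_conj_add_iff :
    (∀ z1 z2 : ℂ, f (C z1 + C z2 * i2) = C (conj z1) + C (conj z2) * i2) ↔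
      f i1 = -i1 ∧ f i2 = i2 := by
  refine ⟨fun h => ⟨by simpa using h I 0, by simpa using h 0 1⟩, fun ⟨h1, h2⟩ z1 z2 => ?_⟩
  rw [map_add, map_mul, map_C_of_map_i1_eq_neg h1, map_C_of_map_i1_eq_neg h1, h2]

lemma forall_map_C_add_C_mul_i2_eq_conj_sub_iff :
    (∀ z1 z2 : ℂ, f (C z1 + C z2 * i2) = C (conj z1) - C (conj z2) * i2) ↔
      f i1 = -i1 ∧ f i2 = -i2 := by
  refine ⟨fun h => ⟨by simpa using h I 0, by simpa using h 0 1⟩, fun ⟨h1, h2⟩ z1 z2 => ?_⟩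
  rw [map_add, map_mul, map_C_of_map_i1_eq_neg h1, map_C_of_map_i1_eq_neg h1, h2, mul_neg,
    sub_eq_add_neg]

end Conditions

end BC

/-- There are exactly six ℝ-algebra automorphisms `f` of `𝔹ℂ` with `f ∘ f = id`,
namely the six listed involutions. -/
theorem stmt_9 :
    Nat.card {f : BC ≃ₐ[ℝ] BC // ∀ s, f (f s) = s} = 6 ∧
    ∀ f : BC ≃ₐ[ℝ] BC,
      (∀ s, f (f s) = s) ↔
        ((∀ s, f s = s) ∨
         (∀ z1 z2 : ℂ, f (C z1 + C z2 * i2) = C z1 - C z2 * i2) ∨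
         (∀ z1 z2 : ℂ, f (C z1 + C z2 * i2)
            = C (starRingEnd ℂ z1) + C (starRingEnd ℂ z2) * i2) ∨
         (∀ z1 z2 : ℂ, f (C z1 + C z2 * i2)
            = C (starRingEnd ℂ z1) - C (starRingEnd ℂ z2) * i2) ∨
         (f i1 = -i2 ∧ f i2 = -i1) ∨
         (f i1 = i2 ∧ f i2 = i1)) := by
  refine ⟨card_involutions, fun f => ?_⟩
  rw [involutive_iff, forall_map_eq_self_iff, forall_map_C_add_C_mul_i2_eq_sub_iff,
    forall_map_C_add_C_mul_i2_eq_conj_add_iff, forall_map_C_add_C_mul_i2_eq_conj_sub_iff]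
  simp only [involutionImages, Set.mem_insert_iff, Set.mem_singleton_iff, Prod.mk.injEq]
end
end

section
/- For every prime p ≥ 3, the only ℝ-algebra automorphism f of 𝔹ℂ with f^p = id is the identity. -/
noncomputable section

open BC

private lemma odd_iter {α : Type*} (f : α → α) {p : ℕ} (hp : Odd p) {x y : α}
    (hxy : f x = y) (hyx : f y = x) : f^[p] x = y := by
  obtain ⟨k, rfl⟩ := hp
  induction k with
  | zero => simpa using hxy
  | succ n ih =>
      have e : 2 * (n + 1) + 1 = (2 * n + 1) + 2 := by ring
      rw [e, Function.iterate_add_apply]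
      have h2 : f^[2] x = x := by
        simp [Function.iterate_succ_apply, hxy, hyx]
      rw [h2, ih]

private lemma zero_or_one {z : ℂ} (hz : z * z = z) : z = 0 ∨ z = 1 := by
  have : z * (z - 1) = 0 := by linear_combination hz
  rcases mul_eq_zero.mp this with h' | h'
  · exact Or.inl h'
  · exact Or.inr (sub_eq_zero.mp h')

private lemma pm_I {z : ℂ} (hz : z * z = -1) : z = Complex.I ∨ z = -Complex.I := by
  have : (z - Complex.I) * (z + Complex.I) = 0 := by
    have := Complex.I_mul_I
    linear_combination hz - this
  rcases mul_eq_zero.mp this with h' | h'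
  · exact Or.inl (sub_eq_zero.mp h')
  · exact Or.inr (eq_neg_of_add_eq_zero_left h')

/-- For every prime `p ≥ 3`, the only ℝ-algebra automorphism `f` of `𝔹ℂ` with
`f^p = id` is the identity. -/
theorem stmt_12 (p : ℕ) (hp : p.Prime) (hp3 : 3 ≤ p) (f : BC ≃ₐ[ℝ] BC)
    (h : ∀ s, (⇑f)^[p] s = s) : ∀ s, f s = s := by
  have hodd : Odd p := hp.odd_of_ne_two (by omega)
  have h12 : e1 + e2 = (1 : BC) := by simp [e1, e2, Prod.ext_iff]
  -- f e1 is a nontrivial idempotent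
  have hu : f e1 * f e1 = f e1 := by
    rw [← map_mul]; congr 1; simp [e1, Prod.ext_iff]
  have c1 := zero_or_one (congrArg Prod.fst hu)
  have c2 := zero_or_one (congrArg Prod.snd hu)
  have hne0 : f e1 ≠ 0 := by
    intro h0
    have : e1 = 0 := f.injective (by simpa using h0)
    simp [e1, Prod.ext_iff] at this
  have hne1 : f e1 ≠ 1 := by
    intro h0
    have : e1 = 1 := f.injective (by simpa using h0)
    simp [e1, Prod.ext_iff] at this
  have hfe1 : f e1 = e1 := by
    rcases c1 with c1 | c1 <;> rcases c2 with c2 | c2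
    · exact absurd (Prod.ext c1 c2) hne0
    · -- f e1 = e2 : parity contradiction
      exfalso
      have he1e2 : f e1 = e2 := Prod.ext c1 c2
      have he2e1 : f e2 = e1 := by
        have : f e2 = 1 - f e1 := by
          rw [← map_one f, ← h12, map_add]; ring
        rw [this, he1e2]
        simp [e1, e2, Prod.ext_iff]
      have := odd_iter (⇑f) hodd he1e2 he2e1
      rw [h e1] at this
      simp [e1, e2, Prod.ext_iff] at this
    · exact Prod.ext c1 c2
    · exact absurd (Prod.ext c1 c2) hne1
  have hfe2 : f e2 = e2 := by
    have : f e2 = 1 - f e1 := by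
      rw [← map_one f, ← h12, map_add]; ring
    rw [this, hfe1]
    simp [e1, e2, Prod.ext_iff]
  -- f fixes (I, 0)
  have hIA : f (Complex.I, 0) = (Complex.I, 0) := by
    set a := f ((Complex.I, 0) : BC) with ha
    have ha2 : a.2 = 0 := by
      have hm : ((Complex.I, 0) : BC) * e2 = 0 := by
        simp [e2, Prod.ext_iff]
      have : a * e2 = 0 := by rw [ha, ← hfe2, ← map_mul, hm, map_zero]
      have := congrArg Prod.snd this
      simpa [e2] using this
    have ha1 : a.1 * a.1 = -1 := by
      have hm : ((Complex.I, 0) : BC) * (Complex.I, 0) = -e1 := by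
        simp [e1, Prod.ext_iff]
      have hma : a * a = -e1 := by
        rw [ha, ← map_mul, hm, map_neg, hfe1]
      simpa [e1] using congrArg Prod.fst hma
    rcases pm_I ha1 with h1 | h1
    · rw [ha]; exact Prod.ext h1 ha2
    · exfalso
      have hxy : f ((Complex.I, 0) : BC) = ((-Complex.I, 0) : BC) := by
        rw [ha] at *
        exact Prod.ext h1 ha2
      have hyx : f ((-Complex.I, 0) : BC) = ((Complex.I, 0) : BC) := by
        have : ((-Complex.I, 0) : BC) = -(Complex.I, 0) := by
          simp [Prod.ext_iff]
        rw [this, map_neg, hxy]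
        simp [Prod.ext_iff]
      have := odd_iter (⇑f) hodd hxy hyx
      rw [h _] at this
      simp [Prod.ext_iff, Complex.ext_iff] at this
      norm_num at this
  -- f fixes (0, I)
  have hIB : f (0, Complex.I) = (0, Complex.I) := by
    set a := f ((0, Complex.I) : BC) with ha
    have ha2 : a.1 = 0 := by
      have hm : ((0, Complex.I) : BC) * e1 = 0 := by
        simp [e1, Prod.ext_iff]
      have : a * e1 = 0 := by rw [ha, ← hfe1, ← map_mul, hm, map_zero]
      have := congrArg Prod.fst this
      simpa [e1] using this
    have ha1 : a.2 * a.2 = -1 := by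
      have hm : ((0, Complex.I) : BC) * (0, Complex.I) = -e2 := by
        simp [e2, Prod.ext_iff]
      have hma : a * a = -e2 := by
        rw [ha, ← map_mul, hm, map_neg, hfe2]
      simpa [e2] using congrArg Prod.snd hma
    rcases pm_I ha1 with h1 | h1
    · rw [ha]; exact Prod.ext ha2 h1
    · exfalso
      have hxy : f ((0, Complex.I) : BC) = ((0, -Complex.I) : BC) := by
        rw [ha] at *
        exact Prod.ext ha2 h1
      have hyx : f ((0, -Complex.I) : BC) = ((0, Complex.I) : BC) := by
        have : ((0, -Complex.I) : BC) = -(0, Complex.I) := by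
          simp [Prod.ext_iff]
        rw [this, map_neg, hxy]
        simp [Prod.ext_iff]
      have := odd_iter (⇑f) hodd hxy hyx
      rw [h _] at this
      simp [Prod.ext_iff, Complex.ext_iff] at this
      norm_num at this
  -- decompose
  intro s
  have hdec : s = s.1.re • e1 + s.1.im • (Complex.I, 0) + s.2.re • e2
      + s.2.im • ((0 : ℂ), Complex.I) := by
    ext <;> simp [e1, e2, Complex.real_smul]
  calc f s = f (s.1.re • e1 + s.1.im • (Complex.I, 0) + s.2.re • e2
      + s.2.im • ((0 : ℂ), Complex.I)) := by rw [← hdec]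
    _ = s := by
      simp only [map_add, map_smul, hfe1, hfe2, hIA, hIB]
      exact hdec.symm
end
end

section
/- Every ℝ-algebra automorphism f of 𝔹ℂ satisfies f⁴ = id; consequently there are exactly eight automorphisms f with f⁴ = id, and exactly two of them have exact order 4. -/
noncomputable section

open BC

/-!
An `ℝ`-algebra automorphism of `𝔹ℂ ≅ ℂ × ℂ` permutes the two primitive idempotents `e₁, e₂`
and sends `i₁ = (i, i)` to one of the four square roots `(±i, ±i)` of `-1`; since `e₁` and `i₁`
generate `𝔹ℂ`, this pins it down. All eight candidates are realized as "swap or not, then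
conjugate or not in each factor", so the automorphism group is the wreath product
`ℤ/2 ≀ ℤ/2`, a dihedral group of order 8. Squaring kills the swap and leaves
"conjugate both factors" exactly when the automorphism swaps and conjugates exactly one factor,
so every square is an involution and the elements of order 4 are these two.
-/

open Complex ComplexConjugate

lemma orderOf_eq_four_iff {G : Type*} [Monoid G] {x : G} (hx : x ^ 4 = 1) :
    orderOf x = 4 ↔ x ^ 2 ≠ 1 := by
  constructor
  · intro h h2
    have := Nat.le_of_dvd two_pos (orderOf_dvd_of_pow_eq_one h2)
    omega
  · intro h2
    exact orderOf_eq_prime_pow (p := 2) (n := 1) (by simpa using h2) (by simpa using hx)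

namespace BC

lemma C_eq_re_add_im (z : ℂ) : C z = z.re • (1 : BC) + z.im • i1 := by
  ext <;> simp [C, i1, Complex.real_smul, Complex.re_add_im]

lemma eq_C_mul_e1_add_C_mul_one_sub_e1 (p : BC) : p = C p.1 * e1 + C p.2 * (1 - e1) := by
  ext <;> simp [C, e1]

lemma algHom_ext {A : Type*} [Ring A] [Algebra ℝ A] {f g : BC →ₐ[ℝ] A}
    (he : f e1 = g e1) (hi : f i1 = g i1) : f = g := by
  ext p
  rw [eq_C_mul_e1_add_C_mul_one_sub_e1 p]
  simp only [C_eq_re_add_im, map_add, map_mul, map_sub, map_one, map_smul, he, hi]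

lemma algEquiv_ext {f g : BC ≃ₐ[ℝ] BC} (he : f e1 = g e1) (hi : f i1 = g i1) : f = g :=
  AlgEquiv.coe_toAlgHom_injective (algHom_ext he hi)

lemma isIdempotentElem_e1 : IsIdempotentElem e1 := by
  ext <;> simp [e1]

lemma eq_e1_or_e2_of_isIdempotentElem {x : BC} (hx : IsIdempotentElem x) (h0 : x ≠ 0)
    (h1 : x ≠ 1) : x = e1 ∨ x = e2 := by
  have hx1 : IsIdempotentElem x.1 := congrArg Prod.fst hx
  have hx2 : IsIdempotentElem x.2 := congrArg Prod.snd hx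
  rcases IsIdempotentElem.iff_eq_zero_or_one.mp hx1 with h | h <;>
    rcases IsIdempotentElem.iff_eq_zero_or_one.mp hx2 with h' | h'
  · exact absurd (Prod.ext h h') h0
  · exact Or.inr (Prod.ext h h')
  · exact Or.inl (Prod.ext h h')
  · exact absurd (Prod.ext h h') h1

def conjIf (a : Bool) : ℂ ≃ₐ[ℝ] ℂ := if a then conjAe else AlgEquiv.refl

@[simp] lemma conjIf_false (z : ℂ) : conjIf false z = z := rfl

@[simp] lemma conjIf_true (z : ℂ) : conjIf true z = conj z := rfl

lemma conjIf_I_injective : Function.Injective fun a => conjIf a I := by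
  intro a b h
  cases a <;> cases b <;> first | rfl | norm_num [Complex.ext_iff] at h

lemma exists_conjIf_I_eq {x : ℂ} (hx : x * x = -1) : ∃ a, conjIf a I = x := by
  rcases mul_self_eq_mul_self_iff.mp (hx.trans I_mul_I.symm) with h | h
  · exact ⟨false, h.symm⟩
  · exact ⟨true, by simp [h]⟩

def swapIf (s : Bool) : BC ≃ₐ[ℝ] BC :=
  if s then AlgEquiv.ofRingEquiv (f := RingEquiv.prodComm) fun _ => rfl else AlgEquiv.refl

def aut (s a b : Bool) : BC ≃ₐ[ℝ] BC :=
  (swapIf s).trans (AlgEquiv.prodCongr (conjIf a) (conjIf b))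

lemma aut_apply (s a b : Bool) (p : BC) :
    aut s a b p = if s then (conjIf a p.2, conjIf b p.1) else (conjIf a p.1, conjIf b p.2) := by
  cases s <;> rfl

lemma aut_e1 (s a b : Bool) : aut s a b e1 = if s then e2 else e1 := by
  cases s <;> simp [aut_apply, e1, e2]

lemma aut_i1 (s a b : Bool) : aut s a b i1 = (conjIf a I, conjIf b I) := by
  cases s <;> simp [aut_apply, i1]

lemma aut_false_false_false : aut false false false = 1 :=
  AlgEquiv.ext fun p => by simp [aut_apply]

lemma aut_sq (s a b : Bool) : aut s a b ^ 2 = aut false (s && (a ^^ b)) (s && (a ^^ b)) :=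
  AlgEquiv.ext fun p => by cases s <;> cases a <;> cases b <;> simp [pow_two, aut_apply]

lemma aut_injective : Function.Injective fun t : Bool × Bool × Bool => aut t.1 t.2.1 t.2.2 := by
  rintro ⟨s, a, b⟩ ⟨s', a', b'⟩ h
  have he := congrArg (fun f : BC ≃ₐ[ℝ] BC => f e1) h
  have hi := congrArg (fun f : BC ≃ₐ[ℝ] BC => f i1) h
  simp only [aut_e1, aut_i1, Prod.mk.injEq] at he hi
  have hs : s = s' := by
    cases s <;> cases s' <;> simp_all [e1, e2]
  rw [hs, conjIf_I_injective hi.1, conjIf_I_injective hi.2]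

lemma exists_aut_eq (f : BC ≃ₐ[ℝ] BC) : ∃ s a b, aut s a b = f := by
  have he : IsIdempotentElem (f e1) := isIdempotentElem_e1.map f
  have hi : f i1 * f i1 = -1 := by rw [← map_mul, i1_mul_i1, map_neg, map_one]
  obtain ⟨s, hs⟩ : ∃ s : Bool, f e1 = if s then e2 else e1 := by
    rcases eq_e1_or_e2_of_isIdempotentElem he
      (by simp [e1, Prod.ext_iff]) (by simp [e1, Prod.ext_iff]) with h | h
    · exact ⟨false, h⟩
    · exact ⟨true, h⟩
  obtain ⟨a, ha⟩ := exists_conjIf_I_eq (congrArg Prod.fst hi)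
  obtain ⟨b, hb⟩ := exists_conjIf_I_eq (congrArg Prod.snd hi)
  exact ⟨s, a, b, algEquiv_ext (by rw [aut_e1, hs]) (by rw [aut_i1, ha, hb])⟩

def autEquiv : Bool × Bool × Bool ≃ (BC ≃ₐ[ℝ] BC) :=
  Equiv.ofBijective _ ⟨aut_injective, fun f =>
    let ⟨s, a, b, h⟩ := exists_aut_eq f; ⟨(s, a, b), h⟩⟩

lemma card_algEquiv : Nat.card (BC ≃ₐ[ℝ] BC) = 8 := by
  rw [← Nat.card_congr autEquiv, Nat.card_eq_fintype_card]
  rfl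

lemma pow_four_eq_one (f : BC ≃ₐ[ℝ] BC) : f ^ 4 = 1 := by
  obtain ⟨s, a, b, rfl⟩ := exists_aut_eq f
  rw [show 4 = 2 * 2 from rfl, pow_mul, aut_sq, aut_sq, Bool.false_and, aut_false_false_false]

lemma orderOf_aut_eq_four_iff (s a b : Bool) :
    orderOf (aut s a b) = 4 ↔ (s && (a ^^ b)) = true := by
  have aut_eq_one_iff (c : Bool) : aut false c c = 1 ↔ c = false := by
    rw [← aut_false_false_false]
    simpa using aut_injective.eq_iff (a := (false, c, c)) (b := (false, false, false))
  rw [orderOf_eq_four_iff (pow_four_eq_one _), aut_sq, Ne, aut_eq_one_iff, Bool.not_eq_false]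

lemma card_orderOf_eq_four : Nat.card {f : BC ≃ₐ[ℝ] BC // orderOf f = 4} = 2 := by
  rw [← Nat.card_congr (autEquiv.subtypeEquiv fun t => (orderOf_aut_eq_four_iff ..).symm),
    Nat.card_eq_fintype_card]
  rfl

end BC

/-- Every ℝ-algebra automorphism of `𝔹ℂ` satisfies `f⁴ = id`; there are exactly eight
automorphisms with `f⁴ = id`, and exactly two of them have exact order `4`. -/
theorem stmt_13 :
    (∀ f : BC ≃ₐ[ℝ] BC, ∀ s, (⇑f)^[4] s = s) ∧
    Nat.card {f : BC ≃ₐ[ℝ] BC // ∀ s, (⇑f)^[4] s = s} = 8 ∧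
    Nat.card {f : BC ≃ₐ[ℝ] BC // orderOf f = 4} = 2 := by
  have iterate_four (f : BC ≃ₐ[ℝ] BC) (p : BC) : (⇑f)^[4] p = p := by
    rw [← AlgEquiv.coe_pow, pow_four_eq_one, AlgEquiv.one_apply]
  refine ⟨iterate_four, ?_, card_orderOf_eq_four⟩
  rw [Nat.card_congr (Equiv.subtypeUnivEquiv fun f => iterate_four f), card_algEquiv]
end
end

section
/- The map f : 𝔹ℂ → 𝔹ℂ given on idempotent components by a e₁ + b e₂ ↦ b̄ e₁ + a e₂ is an ℝ-algebra automorphism satisfying f⁴ = id but f² ≠ id. -/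
/-!
In the idempotent coordinates `𝔹ℂ = ℂ × ℂ` the map is the twisted swap `(a, b) ↦ (σ b, a)` with
`σ = conj`, an automorphism of `A × A` for any automorphism `σ` of `A`. Its square is `σ × σ`,
so its fourth power is `σ² × σ² = id`, while its square is the identity only if `σ` is, and
`conj i = -i`.
-/

noncomputable section

open BC

namespace AlgEquiv

variable {R A : Type*} [CommSemiring R] [Semiring A] [Algebra R A]

def twistedSwap (σ : A ≃ₐ[R] A) : (A × A) ≃ₐ[R] (A × A) where
  toFun p := (σ p.2, p.1)
  invFun p := (p.2, σ.symm p.1)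
  left_inv p := by simp
  right_inv p := by simp
  map_mul' p q := by simp
  map_add' p q := by simp
  commutes' r := by simp [Prod.algebraMap_apply]

variable (σ : A ≃ₐ[R] A)

@[simp]
theorem twistedSwap_apply (p : A × A) : twistedSwap σ p = (σ p.2, p.1) := rfl

theorem twistedSwap_iterate_two (p : A × A) : (twistedSwap σ)^[2] p = (σ p.1, σ p.2) := rfl

theorem twistedSwap_iterate_four {σ : A ≃ₐ[R] A} (hσ : ∀ a, σ (σ a) = a) (p : A × A) :
    (twistedSwap σ)^[4] p = p := by
  change (twistedSwap σ)^[2] ((twistedSwap σ)^[2] p) = p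
  simp only [twistedSwap_iterate_two, hσ]

theorem twistedSwap_iterate_two_eq_id_iff :
    (∀ p, (twistedSwap σ)^[2] p = p) ↔ ∀ a, σ a = a := by
  simp only [twistedSwap_iterate_two, Prod.ext_iff]
  exact ⟨fun h a => (h (a, a)).1, fun h p => ⟨h p.1, h p.2⟩⟩

end AlgEquiv

theorem BC.C_mul_e1_add_C_mul_e2 (a b : ℂ) : C a * e1 + C b * e2 = (a, b) := by
  simp [C, e1, e2]

/-- The map `a e₁ + b e₂ ↦ b̄ e₁ + a e₂` is an ℝ-algebra automorphism of `𝔹ℂ` with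
`f⁴ = id` but `f² ≠ id`. -/
theorem stmt_14 :
    ∃ f : BC ≃ₐ[ℝ] BC,
      (∀ a b : ℂ, f (C a * e1 + C b * e2) = C (starRingEnd ℂ b) * e1 + C a * e2) ∧
      (∀ s, (⇑f)^[4] s = s) ∧ ¬ (∀ s, (⇑f)^[2] s = s) := by
  refine ⟨AlgEquiv.twistedSwap Complex.conjAe, fun a b => ?_,
    AlgEquiv.twistedSwap_iterate_four Complex.conj_conj, ?_⟩
  · simp [C_mul_e1_add_C_mul_e2]
  · rw [AlgEquiv.twistedSwap_iterate_two_eq_id_iff]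
    exact fun h => by simpa [neg_eq_self] using h Complex.I
end
end

section
/- The group of ℝ-algebra automorphisms of 𝔹ℂ under composition is isomorphic to the dihedral group of order 8. -/
noncomputable section

open BC

namespace StmtAux

def phiS : BC ≃ₐ[ℝ] BC :=
  { toFun := fun p => (p.2, p.1)
    invFun := fun p => (p.2, p.1)
    left_inv := fun _ => rfl
    right_inv := fun _ => rfl
    map_add' := fun _ _ => rfl
    map_mul' := fun _ _ => rfl
    commutes' := fun _ => rfl }

def phiR : BC ≃ₐ[ℝ] BC :=
  { toFun := fun p => ((starRingEnd ℂ) p.2, p.1)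
    invFun := fun p => (p.2, (starRingEnd ℂ) p.1)
    left_inv := fun p => by simp
    right_inv := fun p => by simp
    map_add' := fun p q => by simp [Prod.ext_iff]
    map_mul' := fun p q => by simp [Prod.ext_iff]
    commutes' := fun r => by simp [Prod.ext_iff] }

lemma phiS_apply (p : BC) : phiS p = (p.2, p.1) := rfl
lemma phiR_apply (p : BC) : phiR p = ((starRingEnd ℂ) p.2, p.1) := rfl

lemma hr4 : phiR ^ 4 = 1 := by
  refine AlgEquiv.ext fun x => ?_
  simp only [pow_succ, pow_zero, one_mul, AlgEquiv.mul_apply, phiR_apply, AlgEquiv.one_apply]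
  simp

lemma hs2 : phiS * phiS = 1 := by
  refine AlgEquiv.ext fun x => ?_
  simp only [AlgEquiv.mul_apply, phiS_apply, AlgEquiv.one_apply]

lemma hrs : phiR * phiS = phiS * phiR ^ 3 := by
  refine AlgEquiv.ext fun x => ?_
  simp only [pow_succ, pow_zero, one_mul, AlgEquiv.mul_apply, phiR_apply, phiS_apply]
  simp

lemma pow_mod (n : ℕ) : phiR ^ n = phiR ^ (n % 4) := by
  conv_lhs => rw [← Nat.div_add_mod n 4]
  rw [pow_add, pow_mul, hr4, one_pow, one_mul]

lemma hns (n : ℕ) : phiR ^ n * phiS = phiS * phiR ^ (3 * n) := by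
  induction n with
  | zero => simp
  | succ n ih =>
    rw [pow_succ, mul_assoc, hrs, ← mul_assoc, ih, mul_assoc, ← pow_add,
      show 3 * n + 3 = 3 * (n + 1) by ring]

def fD : DihedralGroup 4 → (BC ≃ₐ[ℝ] BC)
  | DihedralGroup.r i => phiR ^ i.val
  | DihedralGroup.sr i => phiS * phiR ^ i.val

lemma key1 : ∀ i j : ZMod 4, ((j - i).val) % 4 = (3 * i.val + j.val) % 4 := by decide

lemma fD_mul (x y : DihedralGroup 4) : fD (x * y) = fD x * fD y := by
  cases x with
  | r i =>
    cases y with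
    | r j =>
      show fD (DihedralGroup.r (i + j)) = _
      show phiR ^ (i + j).val = phiR ^ i.val * phiR ^ j.val
      rw [← pow_add, ZMod.val_add, ← pow_mod]
    | sr j =>
      show fD (DihedralGroup.sr (j - i)) = _
      show phiS * phiR ^ (j - i).val = phiR ^ i.val * (phiS * phiR ^ j.val)
      rw [← mul_assoc, hns, mul_assoc, ← pow_add, pow_mod (3 * i.val + j.val),
        pow_mod ((j - i).val), key1]
  | sr i =>
    cases y with
    | r j =>
      show fD (DihedralGroup.sr (i + j)) = _
      show phiS * phiR ^ (i + j).val = phiS * phiR ^ i.val * phiR ^ j.val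
      rw [mul_assoc, ← pow_add, ZMod.val_add, ← pow_mod]
    | sr j =>
      show fD (DihedralGroup.r (j - i)) = _
      show phiR ^ (j - i).val = phiS * phiR ^ i.val * (phiS * phiR ^ j.val)
      rw [← mul_assoc, mul_assoc phiS, hns, ← mul_assoc, hs2, one_mul, ← pow_add,
        pow_mod (3 * i.val + j.val), pow_mod ((j - i).val), key1]

def f : DihedralGroup 4 →* (BC ≃ₐ[ℝ] BC) := MonoidHom.mk' fD fD_mul

/-- Decomposition of an automorphism value. -/
lemma decomp (φ : BC ≃ₐ[ℝ] BC) (z w : ℂ) :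
    φ (z, w) = z.re • φ (1, 0) + z.im • φ (Complex.I, 0)
      + w.re • φ (0, 1) + w.im • φ (0, Complex.I) := by
  rw [← map_smul, ← map_smul, ← map_smul, ← map_smul, ← map_add, ← map_add, ← map_add]
  congr 1
  simp [Prod.ext_iff, Complex.real_smul]

lemma ext4 (φ ψ : BC ≃ₐ[ℝ] BC) (h1 : φ (1, 0) = ψ (1, 0)) (h2 : φ (0, 1) = ψ (0, 1))
    (h3 : φ (Complex.I, 0) = ψ (Complex.I, 0)) (h4 : φ (0, Complex.I) = ψ (0, Complex.I)) :
    φ = ψ := by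
  refine AlgEquiv.ext fun x => ?_
  obtain ⟨z, w⟩ := x
  rw [decomp φ, decomp ψ, h1, h2, h3, h4]

end StmtAux

namespace StmtAux

lemma fr0_apply (p : BC) : f (DihedralGroup.r 0) p = p := rfl
lemma fr1_apply (p : BC) : f (DihedralGroup.r 1) p = ((starRingEnd ℂ) p.2, p.1) := rfl
lemma fr2_apply (p : BC) : f (DihedralGroup.r 2) p = ((starRingEnd ℂ) p.1, (starRingEnd ℂ) p.2) := rfl
lemma fr3_apply (p : BC) : f (DihedralGroup.r 3) p = (p.2, (starRingEnd ℂ) p.1) := by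
  have h : f (DihedralGroup.r 3) p
      = ((starRingEnd ℂ) ((starRingEnd ℂ) p.2), (starRingEnd ℂ) p.1) := rfl
  rw [h]; simp
lemma fsr0_apply (p : BC) : f (DihedralGroup.sr 0) p = (p.2, p.1) := rfl
lemma fsr1_apply (p : BC) : f (DihedralGroup.sr 1) p = (p.1, (starRingEnd ℂ) p.2) := rfl
lemma fsr2_apply (p : BC) : f (DihedralGroup.sr 2) p = ((starRingEnd ℂ) p.2, (starRingEnd ℂ) p.1) := rfl
lemma fsr3_apply (p : BC) : f (DihedralGroup.sr 3) p = ((starRingEnd ℂ) p.1, p.2) := by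
  have h : f (DihedralGroup.sr 3) p
      = ((starRingEnd ℂ) p.1, (starRingEnd ℂ) ((starRingEnd ℂ) p.2)) := rfl
  rw [h]; simp

lemma ne_one_of_pt (x : DihedralGroup 4) (p : BC) (hp : f x p ≠ p) : f x ≠ 1 :=
  fun h => hp (by rw [h]; rfl)

lemma f_inj : Function.Injective f := by
  refine (injective_iff_map_eq_one f).mpr ?_
  intro x h
  cases x with
  | r i =>
    fin_cases i
    · rfl
    · exact absurd h (ne_one_of_pt (DihedralGroup.r 1) ((1:ℂ),(0:ℂ)) (by
        rw [fr1_apply]; simp [Prod.ext_iff]))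
    · exact absurd h (ne_one_of_pt (DihedralGroup.r 2) ((Complex.I :ℂ),(0:ℂ)) (by
        rw [fr2_apply]; norm_num [Prod.ext_iff, Complex.ext_iff]))
    · exact absurd h (ne_one_of_pt (DihedralGroup.r 3) ((1:ℂ),(0:ℂ)) (by
        rw [fr3_apply]; simp [Prod.ext_iff]))
  | sr i =>
    fin_cases i
    · exact absurd h (ne_one_of_pt (DihedralGroup.sr 0) ((1:ℂ),(0:ℂ)) (by
        rw [fsr0_apply]; simp [Prod.ext_iff]))
    · exact absurd h (ne_one_of_pt (DihedralGroup.sr 1) ((0:ℂ),(Complex.I:ℂ)) (by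
        rw [fsr1_apply]; norm_num [Prod.ext_iff, Complex.ext_iff]))
    · exact absurd h (ne_one_of_pt (DihedralGroup.sr 2) ((1:ℂ),(0:ℂ)) (by
        rw [fsr2_apply]; simp [Prod.ext_iff]))
    · exact absurd h (ne_one_of_pt (DihedralGroup.sr 3) ((Complex.I:ℂ),(0:ℂ)) (by
        rw [fsr3_apply]; norm_num [Prod.ext_iff, Complex.ext_iff]))

lemma idem {z : ℂ} (h : z * z = z) : z = 0 ∨ z = 1 := by
  have h2 : z * (z - 1) = 0 := by linear_combination h
  rcases mul_eq_zero.mp h2 with h3 | h3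
  · exact Or.inl h3
  · exact Or.inr (sub_eq_zero.mp h3)

lemma sq_eq_neg_one {z : ℂ} (h : z * z = -1) : z = Complex.I ∨ z = -Complex.I := by
  have h2 : (z - Complex.I) * (z + Complex.I) = 0 := by
    linear_combination h - Complex.I_mul_I
  rcases mul_eq_zero.mp h2 with h3 | h3
  · exact Or.inl (sub_eq_zero.mp h3)
  · exact Or.inr (eq_neg_of_add_eq_zero_left h3)

lemma values (φ : BC ≃ₐ[ℝ] BC) :
    (φ (1,0) = ((1:ℂ),(0:ℂ)) ∧ φ (0,1) = ((0:ℂ),(1:ℂ))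
      ∧ (φ (Complex.I,0) = (Complex.I,0) ∨ φ (Complex.I,0) = (-Complex.I,0))
      ∧ (φ (0,Complex.I) = (0,Complex.I) ∨ φ (0,Complex.I) = (0,-Complex.I)))
  ∨ (φ (1,0) = ((0:ℂ),(1:ℂ)) ∧ φ (0,1) = ((1:ℂ),(0:ℂ))
      ∧ (φ (Complex.I,0) = (0,Complex.I) ∨ φ (Complex.I,0) = (0,-Complex.I))
      ∧ (φ (0,Complex.I) = (Complex.I,0) ∨ φ (0,Complex.I) = (-Complex.I,0))) := by
  have hid : φ (1,0) * φ (1,0) = φ (1,0) := by rw [← map_mul]; norm_num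
  have hfst := congrArg Prod.fst hid
  have hsnd := congrArg Prod.snd hid
  rw [Prod.fst_mul] at hfst
  rw [Prod.snd_mul] at hsnd
  have hsum : φ (1,0) + φ (0,1) = 1 := by
    rw [← map_add]
    norm_num [Prod.ext_iff]
  have ha0 : φ (Complex.I,0) * φ (0,1) = 0 := by
    rw [← map_mul]
    norm_num [Prod.ext_iff]
  have hb0 : φ (0,Complex.I) * φ (1,0) = 0 := by
    rw [← map_mul]
    norm_num [Prod.ext_iff]
  have haa : φ (Complex.I,0) * φ (Complex.I,0) = -φ (1,0) := by
    rw [← map_mul, ← map_neg]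
    congr 1
    simp [Prod.ext_iff, Complex.I_mul_I]
  have hbb : φ (0,Complex.I) * φ (0,Complex.I) = -φ (0,1) := by
    rw [← map_mul, ← map_neg]
    congr 1
    simp [Prod.ext_iff, Complex.I_mul_I]
  rcases idem hfst with c1 | c1 <;> rcases idem hsnd with c2 | c2
  · -- φ (1,0) = 0 : impossible
    exfalso
    have hu : φ (1,0) = (0 : BC) := Prod.ext c1 c2
    have := φ.injective (hu.trans (map_zero φ).symm)
    simp [Prod.ext_iff] at this
  · -- φ (1,0) = (0,1) : second branch
    right
    have hu : φ (1,0) = ((0:ℂ),(1:ℂ)) := Prod.ext c1 c2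
    have he2 : φ (0,1) = ((1:ℂ),(0:ℂ)) := by
      have h' := hsum
      rw [hu] at h'
      have h'' := eq_sub_of_add_eq' h'
      rw [h'']
      norm_num [Prod.ext_iff]
    refine ⟨hu, he2, ?_, ?_⟩
    · rw [he2] at ha0
      have ha1 : (φ (Complex.I,0)).1 = 0 := by
        have := congrArg Prod.fst ha0
        rw [Prod.fst_mul] at this
        simpa using this
      rw [hu] at haa
      have ha2 : (φ (Complex.I,0)).2 * (φ (Complex.I,0)).2 = -1 := by
        have := congrArg Prod.snd haa
        rw [Prod.snd_mul] at this
        simpa using this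
      rcases sq_eq_neg_one ha2 with h | h
      · exact Or.inl (Prod.ext ha1 h)
      · exact Or.inr (Prod.ext ha1 h)
    · rw [hu] at hb0
      have hb1 : (φ (0,Complex.I)).2 = 0 := by
        have := congrArg Prod.snd hb0
        rw [Prod.snd_mul] at this
        simpa using this
      rw [he2] at hbb
      have hb2 : (φ (0,Complex.I)).1 * (φ (0,Complex.I)).1 = -1 := by
        have := congrArg Prod.fst hbb
        rw [Prod.fst_mul] at this
        simpa using this
      rcases sq_eq_neg_one hb2 with h | h
      · exact Or.inl (Prod.ext h hb1)
      · exact Or.inr (Prod.ext h hb1)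
  · -- φ (1,0) = (1,0) : first branch
    left
    have hu : φ (1,0) = ((1:ℂ),(0:ℂ)) := Prod.ext c1 c2
    have he2 : φ (0,1) = ((0:ℂ),(1:ℂ)) := by
      have h' := hsum
      rw [hu] at h'
      have h'' := eq_sub_of_add_eq' h'
      rw [h'']
      norm_num [Prod.ext_iff]
    refine ⟨hu, he2, ?_, ?_⟩
    · rw [he2] at ha0
      have ha2 : (φ (Complex.I,0)).2 = 0 := by
        have := congrArg Prod.snd ha0
        rw [Prod.snd_mul] at this
        simpa using this
      rw [hu] at haa
      have ha1 : (φ (Complex.I,0)).1 * (φ (Complex.I,0)).1 = -1 := by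
        have := congrArg Prod.fst haa
        rw [Prod.fst_mul] at this
        simpa using this
      rcases sq_eq_neg_one ha1 with h | h
      · exact Or.inl (Prod.ext h ha2)
      · exact Or.inr (Prod.ext h ha2)
    · rw [hu] at hb0
      have hb1 : (φ (0,Complex.I)).1 = 0 := by
        have := congrArg Prod.fst hb0
        rw [Prod.fst_mul] at this
        simpa using this
      rw [he2] at hbb
      have hb2 : (φ (0,Complex.I)).2 * (φ (0,Complex.I)).2 = -1 := by
        have := congrArg Prod.snd hbb
        rw [Prod.snd_mul] at this
        simpa using this
      rcases sq_eq_neg_one hb2 with h | h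
      · exact Or.inl (Prod.ext hb1 h)
      · exact Or.inr (Prod.ext hb1 h)
  · -- φ (1,0) = 1 : impossible
    exfalso
    have hu : φ (1,0) = (1 : BC) := Prod.ext c1 c2
    have := φ.injective (hu.trans (map_one φ).symm)
    simp [Prod.ext_iff] at this

lemma f_surj : Function.Surjective f := by
  intro φ
  rcases values φ with ⟨h1, h2, h3 | h3, h4 | h4⟩ | ⟨h1, h2, h3 | h3, h4 | h4⟩
  · exact ⟨DihedralGroup.r 0, ext4 _ _ (by simp [fr0_apply, h1]) (by simp [fr0_apply, h2])
      (by simp [fr0_apply, h3]) (by simp [fr0_apply, h4])⟩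
  · exact ⟨DihedralGroup.sr 1, ext4 _ _ (by simp [fsr1_apply, h1]) (by simp [fsr1_apply, h2])
      (by simp [fsr1_apply, h3]) (by simp [fsr1_apply, h4])⟩
  · exact ⟨DihedralGroup.sr 3, ext4 _ _ (by simp [fsr3_apply, h1]) (by simp [fsr3_apply, h2])
      (by simp [fsr3_apply, h3]) (by simp [fsr3_apply, h4])⟩
  · exact ⟨DihedralGroup.r 2, ext4 _ _ (by simp [fr2_apply, h1]) (by simp [fr2_apply, h2])
      (by simp [fr2_apply, h3]) (by simp [fr2_apply, h4])⟩
  · exact ⟨DihedralGroup.sr 0, ext4 _ _ (by simp [fsr0_apply, h1]) (by simp [fsr0_apply, h2])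
      (by simp [fsr0_apply, h3]) (by simp [fsr0_apply, h4])⟩
  · exact ⟨DihedralGroup.r 1, ext4 _ _ (by simp [fr1_apply, h1]) (by simp [fr1_apply, h2])
      (by simp [fr1_apply, h3]) (by simp [fr1_apply, h4])⟩
  · exact ⟨DihedralGroup.r 3, ext4 _ _ (by simp [fr3_apply, h1]) (by simp [fr3_apply, h2])
      (by simp [fr3_apply, h3]) (by simp [fr3_apply, h4])⟩
  · exact ⟨DihedralGroup.sr 2, ext4 _ _ (by simp [fsr2_apply, h1]) (by simp [fsr2_apply, h2])
      (by simp [fsr2_apply, h3]) (by simp [fsr2_apply, h4])⟩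

end StmtAux



/-- The group of ℝ-algebra automorphisms of `𝔹ℂ` is isomorphic to the dihedral group
of order 8. -/
theorem stmt_15 : Nonempty ((BC ≃ₐ[ℝ] BC) ≃* DihedralGroup 4) := by
  exact ⟨(MulEquiv.ofBijective StmtAux.f ⟨StmtAux.f_inj, StmtAux.f_surj⟩).symm⟩
end
end
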